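/- arXiv:2009.11649 — 3 statements merged into one kernel-verified Lean document; each statement's English description precedes it below -/
import Mathlib

section
/- (Theorem 1, prescribed-time distributed NE seeking.) Let c > 0 and T > 0, and let x : ℝ → (Fin N → X) satisfy, for every t ∈ [0, T), HasDerivAt x ((c + 1/(T − t)) • (−𝒜 (x t))) t (the closed-loop dynamics of the prescribed-time algorithm), with arbitrary initial condition x 0. Then x(t) converges to the consensus point ψ̃ at the Nash equilibrium in the prescribed time T: Tendsto x (𝓝[Set.Ico 0 T] T) (𝓝 ψ̃), i.e. every player's estimate of the full action profile converges to x* as t → T⁻. -/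
noncomputable section

open Filter

/-- `gradi J i x` is the gradient, at `x i`, of the map `y ↦ J i (Function.update x i y)`,
i.e. player `i`'s partial gradient of its own cost with respect to its own action. -/
def gradi {N : ℕ} {d : Fin N → ℕ}
    (J : ∀ _ : Fin N, (PiLp 2 fun i => EuclideanSpace ℝ (Fin (d i))) → ℝ)
    (i : Fin N) (x : PiLp 2 fun i => EuclideanSpace ℝ (Fin (d i))) :
    EuclideanSpace ℝ (Fin (d i)) :=
  gradient (fun y => J i (WithLp.toLp 2 (Function.update x i y))) (x i)

/-- The pseudo-gradient `F`. -/
def Fmap {N : ℕ} {d : Fin N → ℕ}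
    (J : ∀ _ : Fin N, (PiLp 2 fun i => EuclideanSpace ℝ (Fin (d i))) → ℝ)
    (x : PiLp 2 fun i => EuclideanSpace ℝ (Fin (d i))) :
    PiLp 2 fun i => EuclideanSpace ℝ (Fin (d i)) :=
  WithLp.toLp 2 (fun i => gradi J i x)

/-- The extended pseudo-gradient `F̃`. -/
def Ftil {N : ℕ} {d : Fin N → ℕ}
    (J : ∀ _ : Fin N, (PiLp 2 fun i => EuclideanSpace ℝ (Fin (d i))) → ℝ)
    (ψ : Fin N → PiLp 2 fun i => EuclideanSpace ℝ (Fin (d i))) :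
    PiLp 2 fun i => EuclideanSpace ℝ (Fin (d i)) :=
  WithLp.toLp 2 (fun i => gradi J i (ψ i))

/-- The augmented game map `𝒜`. -/
def Amap {N : ℕ} {d : Fin N → ℕ}
    (J : ∀ _ : Fin N, (PiLp 2 fun i => EuclideanSpace ℝ (Fin (d i))) → ℝ)
    (G : SimpleGraph (Fin N)) [DecidableRel G.Adj] (κ : ℝ)
    (ψ : PiLp 2 fun _ : Fin N => PiLp 2 fun i => EuclideanSpace ℝ (Fin (d i))) :
    PiLp 2 fun _ : Fin N => PiLp 2 fun i => EuclideanSpace ℝ (Fin (d i)) :=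
  WithLp.toLp 2 (fun i => (show PiLp 2 (fun i => EuclideanSpace ℝ (Fin (d i))) from
      WithLp.toLp 2 (Function.update (0 : PiLp 2 fun i => EuclideanSpace ℝ (Fin (d i))) i (Ftil J ψ i)))
    + κ • ∑ j, SimpleGraph.lapMatrix ℝ G i j • ψ j)

/-!
Let `x̄` be the mean of the estimates `ψ i`. Splitting `ψ - ψ̃` into the consensus error
`x̄ - x*` and the disagreement `ψ - consensus x̄`, strong monotonicity of `F` controls the first, the
Laplacian gap `λ₂` amplified by `κ` controls the second, and the Lipschitz bounds control the
cross terms; the gain condition makes the resulting 2 × 2 quadratic form positive definite, so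
`𝒜` is strongly monotone at `ψ̃`. Along the flow, `V = ‖x - ψ̃‖²` then satisfies
`V' ≤ -2μ (c + 1 / (T - t)) V`, whence `V t ≤ V 0 · e^{-2μct} ((T - t) / T)^{2μ} → 0` as `t → T⁻`.
-/

open Finset RealInnerProductSpace Topology

section FiniteFamily

variable {ι E : Type*} [Fintype ι] [NormedAddCommGroup E] [InnerProductSpace ℝ E]

def familyMean (v : ι → E) : E := (Fintype.card ι : ℝ)⁻¹ • ∑ i, v i

lemma sum_sub_familyMean (v : ι → E) : ∑ i, (v i - familyMean v) = 0 := by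
  rcases isEmpty_or_nonempty ι with hι | hι
  · simp
  · rw [sum_sub_distrib, sum_const, card_univ, familyMean, ← Nat.cast_smul_eq_nsmul ℝ,
      smul_inv_smul₀ (by positivity), sub_self]

lemma sum_norm_sub_sq_eq_card_mul_add (v : ι → E) (a : E) :
    ∑ i, ‖v i - a‖ ^ 2
      = Fintype.card ι * ‖familyMean v - a‖ ^ 2 + ∑ i, ‖v i - familyMean v‖ ^ 2 := by
  have hcross : ∑ i, 2 * ⟪v i - familyMean v, familyMean v - a⟫ = 0 := by
    rw [← mul_sum, ← sum_inner, sum_sub_familyMean, inner_zero_left, mul_zero]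
  have hsplit : ∀ i, ‖v i - a‖ ^ 2 = ‖v i - familyMean v‖ ^ 2
      + 2 * ⟪v i - familyMean v, familyMean v - a⟫ + ‖familyMean v - a‖ ^ 2 := fun i => by
    rw [← norm_add_sq_real, sub_add_sub_cancel]
  simp only [hsplit, sum_add_distrib, hcross, add_zero, sum_const, card_univ, nsmul_eq_mul]
  ring

lemma sum_sum_mul_inner_add_const {L : Matrix ι ι ℝ} (hrow : ∀ i, ∑ j, L i j = 0)
    (hcol : ∀ j, ∑ i, L i j = 0) (u v : ι → E) (a b : E) :
    ∑ i, ∑ j, L i j * ⟪u i + a, v j + b⟫ = ∑ i, ∑ j, L i j * ⟪u i, v j⟫ := by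
  have hrow' : ∀ i (r : ℝ), ∑ j, L i j * r = 0 := fun i r => by rw [← sum_mul, hrow, zero_mul]
  have hcol' : ∑ i, ∑ j, L i j * ⟪a, v j⟫ = 0 := by
    rw [sum_comm]; exact sum_eq_zero fun j _ => by rw [← sum_mul, hcol, zero_mul]
  simp only [inner_add_left, inner_add_right, mul_add, sum_add_distrib, hcol', hrow',
    add_zero]

end FiniteFamily

lemma SimpleGraph.sum_lapMatrix_row {V : Type*} [Fintype V] [DecidableEq V] (G : SimpleGraph V)
    [DecidableRel G.Adj] (i : V) : ∑ j, G.lapMatrix ℝ i j = 0 := by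
  simpa [Matrix.mulVec, dotProduct] using congrFun (G.lapMatrix_mulVec_const_eq_zero (R := ℝ)) i

lemma SimpleGraph.sum_lapMatrix_col {V : Type*} [Fintype V] [DecidableEq V] (G : SimpleGraph V)
    [DecidableRel G.Adj] (j : V) : ∑ i, G.lapMatrix ℝ i j = 0 := by
  simpa only [(G.isSymm_lapMatrix (R := ℝ)).apply j] using G.sum_lapMatrix_row j

section PiLp

variable {ι : Type*} [Fintype ι] {β : ι → Type*}

lemma PiLp.norm_toLp_diag_le [∀ i, NormedAddCommGroup (β i)]
    (e : PiLp 2 fun _ : ι => PiLp 2 β) : ‖WithLp.toLp 2 (fun i => e i i)‖ ≤ ‖e‖ := by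
  refine pow_le_pow_iff_left₀ (norm_nonneg _) (norm_nonneg _) two_ne_zero |>.mp ?_
  rw [PiLp.norm_sq_eq_of_L2, PiLp.norm_sq_eq_of_L2]
  exact sum_le_sum fun i _ => pow_le_pow_left₀ (norm_nonneg _) (PiLp.norm_apply_le (e i) i) 2

lemma PiLp.inner_toLp_update_zero_right [DecidableEq ι] [∀ i, NormedAddCommGroup (β i)]
    [∀ i, InnerProductSpace ℝ (β i)] (u : PiLp 2 β) (i : ι) (v : β i) :
    ⟪u, WithLp.toLp 2 (Function.update (0 : PiLp 2 β) i v)⟫ = ⟪u i, v⟫ := by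
  rw [PiLp.inner_apply, sum_eq_single i (fun j _ hj => by simp [Function.update_of_ne hj])
    (fun h => absurd (mem_univ i) h)]
  simp

end PiLp

/-- `(a * b - k ^ 2) / (a + b)` is det / trace of `!![a, -k; -k, b]`, which bounds its smaller
eigenvalue from below. -/
lemma quadratic_form_lower_bound {a b k p q : ℝ} (hab : 0 < a + b) :
    (a * b - k ^ 2) / (a + b) * (p ^ 2 + q ^ 2) ≤ a * p ^ 2 - 2 * k * p * q + b * q ^ 2 := by
  rw [div_mul_eq_mul_div, div_le_iff₀ hab]
  nlinarith [sq_nonneg (a * p - k * q), sq_nonneg (k * p - b * q)]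

def consensus (ι : Type*) {E : Type*} (x : E) : PiLp 2 fun _ : ι => E := WithLp.toLp 2 fun _ => x

@[simp]
lemma consensus_apply {ι E : Type*} (x : E) (i : ι) : consensus ι x i = x := rfl

section AugmentedGameMap

variable {N : ℕ} {d : Fin N → ℕ}

lemma inner_Amap (J : ∀ _ : Fin N, (PiLp 2 fun i => EuclideanSpace ℝ (Fin (d i))) → ℝ)
    (G : SimpleGraph (Fin N)) [DecidableRel G.Adj] (κ : ℝ)
    (w ψ : PiLp 2 fun _ : Fin N => PiLp 2 fun i => EuclideanSpace ℝ (Fin (d i))) :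
    ⟪w, Amap J G κ ψ⟫ = ⟪WithLp.toLp 2 (fun i => w i i), Ftil J ψ⟫
      + κ * ∑ i, ∑ j, G.lapMatrix ℝ i j * ⟪w i, ψ j⟫ := by
  have hrow : ∀ i, ⟪w i, Amap J G κ ψ i⟫
      = ⟪w i i, Ftil J ψ i⟫ + κ * ∑ j, G.lapMatrix ℝ i j * ⟪w i, ψ j⟫ := fun i => by
    simp only [Amap, PiLp.toLp_apply, inner_add_right, PiLp.inner_toLp_update_zero_right,
      real_inner_smul_right, inner_sum]
  simp only [PiLp.inner_apply, hrow, sum_add_distrib, mul_sum]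

lemma le_inner_diag_Ftil {J : ∀ _ : Fin N, (PiLp 2 fun i => EuclideanSpace ℝ (Fin (d i))) → ℝ}
    {ε ι : ℝ}
    (hmono : ∀ x y : PiLp 2 fun i => EuclideanSpace ℝ (Fin (d i)),
      ε * ‖x - y‖ ^ 2 ≤ ⟪x - y, Fmap J x - Fmap J y⟫)
    (hFLip : ∀ x y : PiLp 2 fun i => EuclideanSpace ℝ (Fin (d i)),
      ‖Fmap J x - Fmap J y‖ ≤ ι * ‖x - y‖)
    (hFtilLip : ∀ ψ φ : PiLp 2 fun _ : Fin N => PiLp 2 fun i => EuclideanSpace ℝ (Fin (d i)),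
      ‖Ftil J ψ - Ftil J φ‖ ≤ ι * ‖ψ - φ‖)
    {xstar : PiLp 2 fun i => EuclideanSpace ℝ (Fin (d i))} (hxstar : Fmap J xstar = 0)
    (ψ : PiLp 2 fun _ : Fin N => PiLp 2 fun i => EuclideanSpace ℝ (Fin (d i)))
    (xbar : PiLp 2 fun i => EuclideanSpace ℝ (Fin (d i))) :
    ε * ‖xbar - xstar‖ ^ 2 - 2 * ι * ‖xbar - xstar‖ * ‖ψ - consensus (Fin N) xbar‖
        - ι * ‖ψ - consensus (Fin N) xbar‖ ^ 2
      ≤ ⟪WithLp.toLp 2 (fun i => (ψ - consensus (Fin N) xstar) i i), Ftil J ψ⟫ := by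
  set ehat : PiLp 2 fun i => EuclideanSpace ℝ (Fin (d i)) :=
    WithLp.toLp 2 (fun i => (ψ - consensus (Fin N) xbar) i i)
  have hdiag :
      WithLp.toLp 2 (fun i => (ψ - consensus (Fin N) xstar) i i) = (xbar - xstar) + ehat := by
    ext i : 1
    simp [ehat]
  have hsplit : Ftil J ψ
      = (Ftil J ψ - Ftil J (consensus (Fin N) xbar)) + (Fmap J xbar - Fmap J xstar) := by
    rw [hxstar, sub_zero]
    exact (sub_add_cancel _ _).symm
  have hehat : ‖ehat‖ ≤ ‖ψ - consensus (Fin N) xbar‖ := PiLp.norm_toLp_diag_le _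
  have hFtil := hFtilLip ψ (consensus (Fin N) xbar)
  have hF := hFLip xbar xstar
  have hFtil_term :
      -((‖xbar - xstar‖ + ‖ψ - consensus (Fin N) xbar‖) * (ι * ‖ψ - consensus (Fin N) xbar‖))
      ≤ ⟪(xbar - xstar) + ehat, Ftil J ψ - Ftil J (consensus (Fin N) xbar)⟫ :=
    neg_le_of_abs_le <| (abs_real_inner_le_norm _ _).trans <| mul_le_mul
      ((norm_add_le _ _).trans (by gcongr)) hFtil (norm_nonneg _) (by positivity)
  have hF_term := hmono xbar xstar
  have hcross_term : -(‖ψ - consensus (Fin N) xbar‖ * (ι * ‖xbar - xstar‖))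
      ≤ ⟪ehat, Fmap J xbar - Fmap J xstar⟫ :=
    neg_le_of_abs_le <| (abs_real_inner_le_norm _ _).trans <|
      mul_le_mul hehat hF (norm_nonneg _) (norm_nonneg _)
  rw [hdiag, hsplit, inner_add_right,
    inner_add_left (xbar - xstar) ehat (Fmap J xbar - Fmap J xstar)]
  linarith

lemma le_sum_lapMatrix_mul_inner {G : SimpleGraph (Fin N)} [DecidableRel G.Adj] {lam₂ : ℝ}
    (hlap : ∀ v : Fin N → PiLp 2 fun i => EuclideanSpace ℝ (Fin (d i)),
      ∑ i, v i = 0 → lam₂ * ∑ i, ‖v i‖ ^ 2 ≤ ∑ i, ∑ j, G.lapMatrix ℝ i j * ⟪v i, v j⟫)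
    (ψ : PiLp 2 fun _ : Fin N => PiLp 2 fun i => EuclideanSpace ℝ (Fin (d i)))
    (xstar : PiLp 2 fun i => EuclideanSpace ℝ (Fin (d i))) :
    lam₂ * ‖ψ - consensus (Fin N) (familyMean ψ.ofLp)‖ ^ 2
      ≤ ∑ i, ∑ j, G.lapMatrix ℝ i j * ⟪(ψ - consensus (Fin N) xstar) i, ψ j⟫ := by
  set xbar := familyMean ψ.ofLp
  have hcenter : ∑ i, ∑ j, G.lapMatrix ℝ i j * ⟪(ψ - consensus (Fin N) xstar) i, ψ j⟫
      = ∑ i, ∑ j, G.lapMatrix ℝ i j * ⟪ψ i - xbar, ψ j - xbar⟫ := by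
    rw [← sum_sum_mul_inner_add_const G.sum_lapMatrix_row G.sum_lapMatrix_col
      (fun i => ψ i - xbar) (fun j => ψ j - xbar) (xbar - xstar) xbar]
    simp
  rw [hcenter, PiLp.norm_sq_eq_of_L2]
  exact hlap (fun i => ψ i - xbar) (sum_sub_familyMean _)

lemma Amap_coercive {J : ∀ _ : Fin N, (PiLp 2 fun i => EuclideanSpace ℝ (Fin (d i))) → ℝ}
    {G : SimpleGraph (Fin N)} [DecidableRel G.Adj] {ε ι lam₂ κ : ℝ}
    (hε : 0 < ε) (hι : 0 < ι) (hlam₂ : 0 < lam₂)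
    (hmono : ∀ x y : PiLp 2 fun i => EuclideanSpace ℝ (Fin (d i)),
      ε * ‖x - y‖ ^ 2 ≤ ⟪x - y, Fmap J x - Fmap J y⟫)
    (hFLip : ∀ x y : PiLp 2 fun i => EuclideanSpace ℝ (Fin (d i)),
      ‖Fmap J x - Fmap J y‖ ≤ ι * ‖x - y‖)
    (hFtilLip : ∀ ψ φ : PiLp 2 fun _ : Fin N => PiLp 2 fun i => EuclideanSpace ℝ (Fin (d i)),
      ‖Ftil J ψ - Ftil J φ‖ ≤ ι * ‖ψ - φ‖)
    (hlap : ∀ v : Fin N → PiLp 2 fun i => EuclideanSpace ℝ (Fin (d i)),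
      ∑ i, v i = 0 → lam₂ * ∑ i, ‖v i‖ ^ 2 ≤ ∑ i, ∑ j, G.lapMatrix ℝ i j * ⟪v i, v j⟫)
    {xstar : PiLp 2 fun i => EuclideanSpace ℝ (Fin (d i))} (hxstar : Fmap J xstar = 0)
    (hκgain : (ι ^ 2 / ε + ι) / lam₂ < κ) :
    ∃ μ > 0, ∀ ψ : PiLp 2 fun _ : Fin N => PiLp 2 fun i => EuclideanSpace ℝ (Fin (d i)),
      μ * ‖ψ - consensus (Fin N) xstar‖ ^ 2 ≤ ⟪ψ - consensus (Fin N) xstar, Amap J G κ ψ⟫ := by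
  rw [div_lt_iff₀ hlam₂, div_add' _ _ _ hε.ne', div_lt_iff₀ hε] at hκgain
  have hκ : 0 ≤ κ := by
    by_contra! h
    nlinarith [mul_neg_of_neg_of_pos h hlam₂, mul_pos hι hε, sq_nonneg ι]
  set δ := κ * lam₂ - ι
  set μ₀ := (ε * δ - ι ^ 2) / (ε + δ)
  have hμ₀ : 0 < μ₀ := div_pos (by nlinarith) (by nlinarith)
  refine ⟨μ₀ / (N + 1), by positivity, fun ψ => ?_⟩
  set xbar := familyMean ψ.ofLp
  set p := ‖xbar - xstar‖
  set q := ‖ψ - consensus (Fin N) xbar‖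
  have hnorm : ‖ψ - consensus (Fin N) xstar‖ ^ 2 = N * p ^ 2 + q ^ 2 := by
    have hq : q ^ 2 = ∑ i, ‖ψ i - xbar‖ ^ 2 := PiLp.norm_sq_eq_of_L2 _ _
    rw [hq, PiLp.norm_sq_eq_of_L2]
    simpa using sum_norm_sub_sq_eq_card_mul_add ψ.ofLp xstar
  have hdiag := le_inner_diag_Ftil hmono hFLip hFtilLip hxstar ψ xbar
  have hlapq := mul_le_mul_of_nonneg_left (le_sum_lapMatrix_mul_inner hlap ψ xstar) hκ
  have hquad := quadratic_form_lower_bound (a := ε) (b := δ) (k := ι) (p := p) (q := q)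
    (by nlinarith)
  have hμ : μ₀ / (N + 1) * (N * p ^ 2 + q ^ 2) ≤ μ₀ * (p ^ 2 + q ^ 2) := by
    rw [div_mul_eq_mul_div, div_le_iff₀ (by positivity)]
    nlinarith [mul_nonneg hμ₀.le (sq_nonneg p),
      mul_nonneg (mul_nonneg hμ₀.le (sq_nonneg q)) (Nat.cast_nonneg N)]
  rw [hnorm, inner_Amap]
  linarith

end AugmentedGameMap

section PrescribedTime

lemma hasDerivAt_mul_sub_log_sub (c : ℝ) {T t : ℝ} (ht : t < T) :
    HasDerivAt (fun s => c * s - Real.log (T - s)) (c + 1 / (T - t)) t := by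
  have hlog := ((hasDerivAt_id' t).const_sub T).log (sub_pos.2 ht).ne'
  exact (((hasDerivAt_id' t).const_mul c).sub hlog).congr_deriv (by ring)

lemma tendsto_mul_sub_log_sub_atTop (c T : ℝ) :
    Tendsto (fun s => c * s - Real.log (T - s)) (𝓝[<] T) atTop := by
  have hgap : Tendsto (fun s => T - s) (𝓝[<] T) (𝓝[>] 0) :=
    tendsto_nhdsWithin_iff.2
      ⟨((continuous_const.sub continuous_id).tendsto' T 0 (sub_self T)).mono_left
        nhdsWithin_le_nhds,
        eventually_nhdsWithin_of_forall fun s hs => Set.mem_Ioi.2 (sub_pos.2 hs)⟩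
  have hlin : Tendsto (fun s => c * s) (𝓝[<] T) (𝓝 (c * T)) :=
    ((continuous_const.mul continuous_id).tendsto T).mono_left nhdsWithin_le_nhds
  exact hlin.add_atTop (tendsto_neg_atBot_atTop.comp (Real.tendsto_log_nhdsGT_zero.comp hgap))

lemma le_mul_exp_sub_of_hasDerivAt_le_neg_mul {V V' g g' : ℝ → ℝ} {a b : ℝ}
    (hV : ∀ t ∈ Set.Ico a b, HasDerivAt V (V' t) t)
    (hg : ∀ t ∈ Set.Ico a b, HasDerivAt g (g' t) t)
    (hle : ∀ t ∈ Set.Ico a b, V' t ≤ -(g' t * V t)) :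
    ∀ t ∈ Set.Ico a b, V t ≤ V a * Real.exp (g a - g t) := by
  have hderiv : ∀ t ∈ Set.Ico a b, HasDerivAt (fun s => V s * Real.exp (g s))
      (V' t * Real.exp (g t) + V t * (Real.exp (g t) * g' t)) t :=
    fun t ht => (hV t ht).mul (hg t ht).exp
  have hanti : AntitoneOn (fun s => V s * Real.exp (g s)) (Set.Ico a b) := by
    refine antitoneOn_of_hasDerivWithinAt_nonpos (convex_Ico a b)
      (f' := fun t => V' t * Real.exp (g t) + V t * (Real.exp (g t) * g' t))
      (fun t ht => (hderiv t ht).continuousAt.continuousWithinAt)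
      (fun t ht => ?_) (fun t ht => ?_) <;> rw [interior_Ico] at ht
    · exact (hderiv t (Set.Ioo_subset_Ico_self ht)).hasDerivWithinAt
    · have := hle t (Set.Ioo_subset_Ico_self ht)
      nlinarith [Real.exp_pos (g t)]
  intro t ht
  have hmono := hanti (Set.left_mem_Ico.2 (ht.1.trans_lt ht.2)) ht ht.1
  rw [Real.exp_sub, mul_div_assoc', le_div_iff₀ (Real.exp_pos _)]
  exact hmono

lemma tendsto_of_hasDerivAt_prescribedTime_flow {E : Type*} [NormedAddCommGroup E]
    [InnerProductSpace ℝ E] {A : E → E} {xstar : E} {μ c T : ℝ} (hμ : 0 < μ) (hc : 0 ≤ c)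
    (hA : ∀ y, μ * ‖y - xstar‖ ^ 2 ≤ ⟪y - xstar, A y⟫) {x : ℝ → E}
    (hx : ∀ t ∈ Set.Ico 0 T, HasDerivAt x ((c + 1 / (T - t)) • -A (x t)) t) :
    Tendsto x (𝓝[Set.Ico 0 T] T) (𝓝 xstar) := by
  set g : ℝ → ℝ := fun s => 2 * μ * (c * s - Real.log (T - s))
  have hV : ∀ t ∈ Set.Ico 0 T, HasDerivAt (‖x · - xstar‖ ^ 2)
      (2 * ⟪x t - xstar, (c + 1 / (T - t)) • -A (x t)⟫) t :=
    fun t ht => ((hx t ht).sub_const xstar).norm_sq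
  have hg : ∀ t ∈ Set.Ico 0 T, HasDerivAt g (2 * μ * (c + 1 / (T - t))) t :=
    fun t ht => (hasDerivAt_mul_sub_log_sub c ht.2).const_mul (2 * μ)
  have hbound := le_mul_exp_sub_of_hasDerivAt_le_neg_mul hV hg fun t ht => by
    have hrate : 0 ≤ c + 1 / (T - t) := by have := sub_pos.2 ht.2; positivity
    rw [real_inner_smul_right, inner_neg_right]
    nlinarith [mul_le_mul_of_nonneg_left (hA (x t)) hrate]
  have hg_top : Tendsto g (𝓝[Set.Ico 0 T] T) atTop :=
    ((tendsto_mul_sub_log_sub_atTop c T).const_mul_atTop (by positivity)).mono_left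
      (nhdsWithin_mono _ Set.Ico_subset_Iio_self)
  have hV_zero : Tendsto (‖x · - xstar‖ ^ 2) (𝓝[Set.Ico 0 T] T) (𝓝 0) := by
    refine squeeze_zero' (Eventually.of_forall fun t => by positivity)
      (eventually_nhdsWithin_of_forall hbound) ?_
    simpa [sub_eq_add_neg] using ((Real.tendsto_exp_atBot.comp
      (tendsto_atBot_add_const_left _ (g 0) (tendsto_neg_atTop_atBot.comp hg_top))).const_mul
      (‖x 0 - xstar‖ ^ 2))
  rw [tendsto_iff_norm_sub_tendsto_zero]
  simpa [Function.comp_def, Real.sqrt_sq_eq_abs] using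
    (Real.continuous_sqrt.tendsto 0).comp hV_zero

end PrescribedTime

theorem prescribed_time_distributed_NE_seeking_general
    {N : ℕ} {d : Fin N → ℕ}
    (J : ∀ _ : Fin N, (PiLp 2 fun i => EuclideanSpace ℝ (Fin (d i))) → ℝ)
    (G : SimpleGraph (Fin N)) [DecidableRel G.Adj]
    (ε ι lam₂ κ : ℝ) (hε : 0 < ε) (hι : 0 < ι) (hlam₂ : 0 < lam₂)
    (hmono : ∀ x y : PiLp 2 fun i => EuclideanSpace ℝ (Fin (d i)),
      (inner ℝ (x - y) (Fmap J x - Fmap J y) : ℝ) ≥ ε * ‖x - y‖ ^ 2)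
    (hFLip : ∀ x y : PiLp 2 fun i => EuclideanSpace ℝ (Fin (d i)),
      ‖Fmap J x - Fmap J y‖ ≤ ι * ‖x - y‖)
    (hFtilLip : ∀ ψ φ : PiLp 2 fun _ : Fin N => PiLp 2 fun i => EuclideanSpace ℝ (Fin (d i)),
      ‖Ftil J ψ - Ftil J φ‖ ≤ ι * ‖ψ - φ‖)
    (hlap : ∀ v : Fin N → PiLp 2 fun i => EuclideanSpace ℝ (Fin (d i)),
      ∑ i, v i = 0 →
      ∑ i, ∑ j, SimpleGraph.lapMatrix ℝ G i j * (inner ℝ (v i) (v j) : ℝ) ≥ lam₂ * ∑ i, ‖v i‖ ^ 2)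
    (xstar : PiLp 2 fun i => EuclideanSpace ℝ (Fin (d i))) (hxstar : Fmap J xstar = 0)
    (hκgain : κ > (ι ^ 2 / ε + ι) / lam₂)
    (c T : ℝ) (hc : 0 < c)
    (x : ℝ → PiLp 2 fun _ : Fin N => PiLp 2 fun i => EuclideanSpace ℝ (Fin (d i)))
    (hx : ∀ t ∈ Set.Ico (0 : ℝ) T,
      HasDerivAt x ((c + 1 / (T - t)) • (-(Amap J G κ (x t)))) t) :
    Tendsto x (nhdsWithin T (Set.Ico 0 T))
      (nhds (show PiLp 2 (fun _ : Fin N => PiLp 2 fun i => EuclideanSpace ℝ (Fin (d i))) from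
        WithLp.toLp 2 (fun _ => xstar))) := by
  obtain ⟨μ, hμ, hcoercive⟩ :=
    Amap_coercive hε hι hlam₂ hmono hFLip hFtilLip hlap hxstar hκgain
  exact tendsto_of_hasDerivAt_prescribedTime_flow hμ hc.le hcoercive hx

/-- **Theorem 1** (prescribed-time distributed NE seeking): under the closed-loop
prescribed-time dynamics, all players' estimates converge to the consensus point at the
Nash equilibrium `x*` in the prescribed time `T`. -/
theorem prescribed_time_distributed_NE_seeking
    {N : ℕ} (hN : 1 ≤ N) {d : Fin N → ℕ}
    (J : ∀ _ : Fin N, (PiLp 2 fun i => EuclideanSpace ℝ (Fin (d i))) → ℝ)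
    (hJ : ∀ i, Differentiable ℝ (J i))
    (G : SimpleGraph (Fin N)) [DecidableRel G.Adj] (hG : G.Connected)
    (ε ι lam₂ κ : ℝ) (hε : 0 < ε) (hι : 0 < ι) (hlam₂ : 0 < lam₂)
    (hmono : ∀ x y : PiLp 2 fun i => EuclideanSpace ℝ (Fin (d i)),
      (inner ℝ (x - y) (Fmap J x - Fmap J y) : ℝ) ≥ ε * ‖x - y‖ ^ 2)
    (hFLip : ∀ x y : PiLp 2 fun i => EuclideanSpace ℝ (Fin (d i)),
      ‖Fmap J x - Fmap J y‖ ≤ ι * ‖x - y‖)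
    (hFtilLip : ∀ ψ φ : PiLp 2 fun _ : Fin N => PiLp 2 fun i => EuclideanSpace ℝ (Fin (d i)),
      ‖Ftil J ψ - Ftil J φ‖ ≤ ι * ‖ψ - φ‖)
    (hlap : ∀ v : Fin N → PiLp 2 fun i => EuclideanSpace ℝ (Fin (d i)),
      ∑ i, v i = 0 →
      ∑ i, ∑ j, SimpleGraph.lapMatrix ℝ G i j * (inner ℝ (v i) (v j) : ℝ) ≥ lam₂ * ∑ i, ‖v i‖ ^ 2)
    (xstar : PiLp 2 fun i => EuclideanSpace ℝ (Fin (d i))) (hxstar : Fmap J xstar = 0)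
    (hκgain : κ > (ι ^ 2 / ε + ι) / lam₂)
    (c T : ℝ) (hc : 0 < c) (hT : 0 < T)
    (x : ℝ → PiLp 2 fun _ : Fin N => PiLp 2 fun i => EuclideanSpace ℝ (Fin (d i)))
    (hx : ∀ t ∈ Set.Ico (0 : ℝ) T,
      HasDerivAt x ((c + 1 / (T - t)) • (-(Amap J G κ (x t)))) t) :
    Tendsto x (nhdsWithin T (Set.Ico 0 T))
      (nhds (show PiLp 2 (fun _ : Fin N => PiLp 2 fun i => EuclideanSpace ℝ (Fin (d i))) from
        WithLp.toLp 2 (fun _ => xstar))) :=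
  prescribed_time_distributed_NE_seeking_general J G ε ι lam₂ κ hε hι hlam₂ hmono hFLip hFtilLip
    hlap xstar hxstar hκgain c T hc x hx
end
end

section
/- (Proposition 1, equilibria of the augmented dynamics are consensus at the NE.) Let κ > 0 and suppose ψ : Fin N → X satisfies 𝒜 ψ = 0, i.e. for every i, Function.update (0 : X) i ((F̃ ψ) i) + κ • ∑ j, L i j • ψ j = 0. Then all players' estimates coincide and equal the Nash equilibrium: ψ i = x* for every i ∈ Fin N; in particular F̃ ψ = 0 and ∑ j, L i j • ψ j = 0 for every i. -/
/-!
Off its own block, player `i`'s equation reads `κ (Lψ)ᵢ = 0`, because `F̃` enters only through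
`Function.update 0 i`. Summing all equations eliminates the Laplacian term (the columns of `L` sum
to zero), so the remaining diagonal blocks vanish as well; hence `Lψ = 0` and `F̃ ψ = 0`. On a
connected graph `Lψ = 0` forces all estimates to agree, so each `ψ i` is a zero of `F`, and a
strongly monotone map has at most one zero.
-/

noncomputable section

open Filter

namespace SimpleGraph

variable {V : Type*} [Fintype V] [DecidableEq V] (G : SimpleGraph V) [DecidableRel G.Adj]

theorem sum_lapMatrix_apply_left (R : Type*) [NonAssocRing R] (j : V) :
    ∑ i, G.lapMatrix R i j = 0 := by
  have hrow := congrFun (lapMatrix_mulVec_const_eq_zero (R := R) G) j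
  simp only [Matrix.mulVec, dotProduct, mul_one, Pi.zero_apply] at hrow
  simpa only [(G.isSymm_lapMatrix (R := R)).apply j] using hrow

theorem sum_sum_lapMatrix_smul {R M : Type*} [Ring R] [AddCommGroup M] [Module R M]
    (v : V → M) : ∑ i, ∑ j, G.lapMatrix R i j • v j = 0 := by
  rw [Finset.sum_comm]
  simp only [← Finset.sum_smul, sum_lapMatrix_apply_left, zero_smul, Finset.sum_const_zero]

/-- Tested against every linear functional, this reduces to the scalar case
`lapMatrix_mulVec_eq_zero_iff_forall_reachable`. -/
theorem eq_of_lapMatrix_smul_eq_zero {M : Type*} [AddCommGroup M] [Module ℝ M] {v : V → M}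
    (hv : ∀ i, ∑ j, G.lapMatrix ℝ i j • v j = 0) {a b : V} (hab : G.Reachable a b) :
    v a = v b := by
  rw [← sub_eq_zero, ← Module.forall_dual_apply_eq_zero_iff ℝ]
  intro φ
  have hker : (G.lapMatrix ℝ).mulVec (fun j => φ (v j)) = 0 := by
    ext i
    simpa [Matrix.mulVec, dotProduct] using congrArg φ (hv i)
  rw [map_sub, sub_eq_zero]
  exact (lapMatrix_mulVec_eq_zero_iff_forall_reachable G).mp hker a b hab

end SimpleGraph

theorem injective_of_strongly_monotone {E : Type*} [NormedAddCommGroup E] [InnerProductSpace ℝ E]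
    {F : E → E} {ε : ℝ} (hε : 0 < ε)
    (hF : ∀ x y, inner ℝ (x - y) (F x - F y) ≥ ε * ‖x - y‖ ^ 2) :
    Function.Injective F := by
  intro x y hxy
  have h := hF x y
  rw [hxy, sub_self, inner_zero_right] at h
  have : ‖x - y‖ ^ 2 ≤ 0 := nonpos_of_mul_nonpos_right h hε
  simpa [sub_eq_zero] using this

theorem Pi.eq_zero_of_single_add_eq_zero {ι : Type*} [Fintype ι] [DecidableEq ι]
    {β : ι → Type*} [∀ i, AddCommGroup (β i)] {g : ∀ i, β i} {y : ι → ∀ k, β k}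
    (h : ∀ i, Pi.single i (g i) + y i = 0) (hsum : ∑ i, y i = 0) : g = 0 ∧ y = 0 := by
  have hoff : ∀ i k, i ≠ k → y i k = 0 := fun i k hik => by
    simpa [Pi.single_eq_of_ne' hik] using congrFun (h i) k
  have hdiag : ∀ k, y k k = 0 := fun k => by
    simpa [Finset.sum_apply, Finset.sum_eq_single k (fun i _ hik => hoff i k hik)] using
      congrFun hsum k
  refine ⟨funext fun k => by simpa [hdiag k] using congrFun (h k) k,
    funext fun i => funext fun k => ?_⟩
  rcases eq_or_ne i k with rfl | hik
  exacts [hdiag i, hoff i k hik]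

theorem equilibria_are_consensus_at_NE_general
    {N : ℕ} {d : Fin N → ℕ}
    (J : ∀ _ : Fin N, (PiLp 2 fun i => EuclideanSpace ℝ (Fin (d i))) → ℝ)
    (G : SimpleGraph (Fin N)) [DecidableRel G.Adj] (hG : G.Connected)
    (ε : ℝ) (hε : 0 < ε)
    (hmono : ∀ x y : PiLp 2 fun i => EuclideanSpace ℝ (Fin (d i)),
      (inner ℝ (x - y) (Fmap J x - Fmap J y) : ℝ) ≥ ε * ‖x - y‖ ^ 2)
    (xstar : PiLp 2 fun i => EuclideanSpace ℝ (Fin (d i))) (hxstar : Fmap J xstar = 0)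
    (κ : ℝ) (hκ : 0 < κ)
    (ψ : Fin N → PiLp 2 fun i => EuclideanSpace ℝ (Fin (d i)))
    (heq : ∀ i, (show PiLp 2 (fun i => EuclideanSpace ℝ (Fin (d i))) from
        WithLp.toLp 2 (Function.update (0 : PiLp 2 fun i => EuclideanSpace ℝ (Fin (d i))) i (Ftil J ψ i)))
      + κ • ∑ j, SimpleGraph.lapMatrix ℝ G i j • ψ j = 0) :
    (∀ i, ψ i = xstar) ∧ Ftil J ψ = 0 ∧
      ∀ i, ∑ j, SimpleGraph.lapMatrix ℝ G i j • ψ j = 0 := by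
  have hblocks : ∀ i, Pi.single i (Ftil J ψ i)
      + WithLp.ofLp (κ • ∑ j, G.lapMatrix ℝ i j • ψ j) = 0 :=
    fun i => congrArg WithLp.ofLp (heq i)
  obtain ⟨hFtil, hconsensus⟩ := Pi.eq_zero_of_single_add_eq_zero hblocks <| by
    rw [← WithLp.ofLp_sum, ← Finset.smul_sum, G.sum_sum_lapMatrix_smul, smul_zero,
      WithLp.ofLp_zero]
  have hlap : ∀ i, ∑ j, G.lapMatrix ℝ i j • ψ j = 0 := fun i =>
    (smul_eq_zero.mp ((WithLp.ofLp_eq_zero 2).mp (congrFun hconsensus i))).resolve_left hκ.ne'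
  have hψ : ∀ a b, ψ a = ψ b := fun a b =>
    G.eq_of_lapMatrix_smul_eq_zero hlap (hG.preconnected a b)
  have hF : ∀ i, Fmap J (ψ i) = 0 := fun i =>
    WithLp.ofLp_injective 2 <| funext fun k => by
      change gradi J k (ψ i) = 0
      rw [hψ i k]
      exact congrFun hFtil k
  exact ⟨fun i => injective_of_strongly_monotone hε hmono ((hF i).trans hxstar.symm),
    WithLp.ofLp_injective 2 hFtil, hlap⟩

/-- **Proposition 1**: any equilibrium of the augmented dynamics is a consensus at the
Nash equilibrium: all estimates coincide with `x*`, the extended pseudo-gradient vanishes,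
and the Laplacian (consensus) term vanishes. -/
theorem equilibria_are_consensus_at_NE
    {N : ℕ} (hN : 1 ≤ N) {d : Fin N → ℕ}
    (J : ∀ _ : Fin N, (PiLp 2 fun i => EuclideanSpace ℝ (Fin (d i))) → ℝ)
    (hJ : ∀ i, Differentiable ℝ (J i))
    (G : SimpleGraph (Fin N)) [DecidableRel G.Adj] (hG : G.Connected)
    (ε : ℝ) (hε : 0 < ε)
    (hmono : ∀ x y : PiLp 2 fun i => EuclideanSpace ℝ (Fin (d i)),
      (inner ℝ (x - y) (Fmap J x - Fmap J y) : ℝ) ≥ ε * ‖x - y‖ ^ 2)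
    (xstar : PiLp 2 fun i => EuclideanSpace ℝ (Fin (d i))) (hxstar : Fmap J xstar = 0)
    (κ : ℝ) (hκ : 0 < κ)
    (ψ : Fin N → PiLp 2 fun i => EuclideanSpace ℝ (Fin (d i)))
    (heq : ∀ i, (show PiLp 2 (fun i => EuclideanSpace ℝ (Fin (d i))) from
        WithLp.toLp 2 (Function.update (0 : PiLp 2 fun i => EuclideanSpace ℝ (Fin (d i))) i (Ftil J ψ i)))
      + κ • ∑ j, SimpleGraph.lapMatrix ℝ G i j • ψ j = 0) :
    (∀ i, ψ i = xstar) ∧ Ftil J ψ = 0 ∧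
      ∀ i, ∑ j, SimpleGraph.lapMatrix ℝ G i j • ψ j = 0 :=
  equilibria_are_consensus_at_NE_general J G hG ε hε hmono xstar hxstar κ hκ ψ heq
end
end

section
/- (Key step of Proposition 1: extracting the stationarity conditions from the equilibrium equation.) Let G be any simple graph on Fin N with Laplacian matrix L := SimpleGraph.lapMatrix ℝ G, let κ ≠ 0, let X := Π i, EuclideanSpace ℝ (Fin (d i)), and let w ∈ X and ψ : Fin N → X. If for every i ∈ Fin N, Function.update (0 : X) i (w i) + κ • ∑ j, L i j • ψ j = 0, then w = 0 and ∑ j, L i j • ψ j = 0 for every i. -/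
/-!
Summing the equations over `i`, the single-block vectors `Function.update 0 i (w i)` add up to
`w`, while the Laplacian terms add up to zero because every column of `L` sums to zero. Hence
`w = 0`, after which the `i`-th equation reads `κ • ∑ j, L i j • ψ j = 0`.
-/

namespace SimpleGraph

variable {V R : Type*} [Fintype V] [DecidableEq V] [Ring R] (G : SimpleGraph V) [DecidableRel G.Adj]

theorem sum_lapMatrix_col_eq_zero (j : V) : ∑ i, G.lapMatrix R i j = 0 := by
  have hrow : ∑ i, G.lapMatrix R j i = 0 := by
    simpa [Matrix.mulVec, dotProduct] using congrFun (G.lapMatrix_mulVec_const_eq_zero (R := R)) j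
  rw [← hrow]
  exact Finset.sum_congr rfl fun i _ => (G.isSymm_lapMatrix (R := R)).apply j i

theorem sum_sum_lapMatrix_smul_eq_zero {M : Type*} [AddCommGroup M] [Module R M] (ψ : V → M) :
    ∑ i, ∑ j, G.lapMatrix R i j • ψ j = 0 := by
  rw [Finset.sum_comm]
  exact Finset.sum_eq_zero fun j _ => by
    rw [← Finset.sum_smul, G.sum_lapMatrix_col_eq_zero, zero_smul]

end SimpleGraph

theorem PiLp.univ_sum_single {p : ENNReal} {ι : Type*} [Fintype ι] [DecidableEq ι]
    {β : ι → Type*} [∀ i, AddCommGroup (β i)] (w : PiLp p β) :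
    ∑ i, PiLp.single p i (w i) = w := by
  simp_rw [← PiLp.toLp_single, ← WithLp.toLp_sum, Finset.univ_sum_single]

/-- Key step of Proposition 1: if for every `i` the block vector with only `i`-th block
`w i`, plus `κ` times the Laplacian consensus term, vanishes, then `w = 0` and every
Laplacian consensus term vanishes. -/
theorem stationarity_from_equilibrium_equation {N : ℕ} {d : Fin N → ℕ}
    (G : SimpleGraph (Fin N)) [DecidableRel G.Adj] (κ : ℝ) (hκ : κ ≠ 0)
    (w : PiLp 2 fun i => EuclideanSpace ℝ (Fin (d i)))
    (ψ : Fin N → PiLp 2 fun i => EuclideanSpace ℝ (Fin (d i)))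
    (h : ∀ i, (show PiLp 2 (fun i => EuclideanSpace ℝ (Fin (d i))) from
        WithLp.toLp 2 (Function.update (0 : PiLp 2 fun i => EuclideanSpace ℝ (Fin (d i))) i (w i)))
      + κ • ∑ j, SimpleGraph.lapMatrix ℝ G i j • ψ j = 0) :
    w = 0 ∧ ∀ i, ∑ j, SimpleGraph.lapMatrix ℝ G i j • ψ j = 0 := by
  have hsingle : ∀ i, PiLp.single 2 i (w i) + κ • ∑ j, G.lapMatrix ℝ i j • ψ j = 0 := h
  have hw : w = 0 := by
    have hsum := Finset.sum_eq_zero (s := Finset.univ) fun i _ => hsingle i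
    rwa [Finset.sum_add_distrib, ← Finset.smul_sum, G.sum_sum_lapMatrix_smul_eq_zero, smul_zero,
      add_zero, PiLp.univ_sum_single] at hsum
  subst hw
  exact ⟨rfl, fun i => by simpa [hκ] using h i⟩
end
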